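/- The Scorer function Gi(z) = (1/π) · lim_{R→∞} ∫₀^R sin(zy + y³/3) dy is differentiable on ℝ, and its derivative is given by differentiating under the integral sign: for every z ∈ ℝ, Gi'(z) = (1/π) · lim_{R→∞} ∫₀^R y · cos(zy + y³/3) dy, with this limit existing. -/

import Mathlib

/-!
Write `φ(y) = z y + y³/3`, so that `φ'(y) = z + y²`. The partial integrals
`∫₀^R sin φ` are differentiable in `z` with derivative `∫₀^R y cos φ`. Since
`y cos φ = u · (sin ∘ φ)'` with `u(y) = y / (z + y²)` nonnegative and decreasing once
`y² ≥ 2|z|`, integration by parts bounds `∫_a^b y cos φ` by `4 / a`, uniformly for `z` in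
a bounded set. Hence the derivatives converge locally uniformly, and the limit of the
partial integrals is differentiable with the limit of the derivatives as derivative.
-/

open Real Filter MeasureTheory intervalIntegral Set Topology

lemma hasDerivAt_integral_sin_mul_add {ψ : ℝ → ℝ} (hψ : Continuous ψ) (a b z : ℝ) :
    HasDerivAt (fun x => ∫ t in a..b, sin (x * t + ψ t))
      (∫ t in a..b, t * cos (z * t + ψ t)) z := by
  refine (hasDerivAt_integral_of_dominated_loc_of_deriv_le (μ := volume)
    (F' := fun x t => t * cos (x * t + ψ t)) (bound := fun t => |t|) univ_mem
    (Eventually.of_forall fun x => (by fun_prop : Continuous _).aestronglyMeasurable)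
    ((by fun_prop : Continuous _).intervalIntegrable _ _)
    (by fun_prop : Continuous _).aestronglyMeasurable ?_
    (continuous_abs.intervalIntegrable _ _) ?_).2
  · refine ae_of_all _ fun t _ x _ => ?_
    rw [norm_mul, Real.norm_eq_abs]
    exact mul_le_of_le_one_right (abs_nonneg t) (abs_cos_le_one _)
  · refine ae_of_all _ fun t _ x _ => ?_
    simpa [mul_comm] using (((hasDerivAt_id x).mul_const t).add_const (ψ t)).sin

/-- A form of the second mean value theorem. -/
lemma abs_integral_mul_deriv_le_of_deriv_nonpos {u u' v v' : ℝ → ℝ} {a b C : ℝ}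
    (hab : a ≤ b)
    (hu : ∀ x ∈ Icc a b, HasDerivAt u (u' x) x) (hv : ∀ x ∈ Icc a b, HasDerivAt v (v' x) x)
    (hu'int : IntervalIntegrable u' volume a b) (hv'int : IntervalIntegrable v' volume a b)
    (hu'_nonpos : ∀ x ∈ Icc a b, u' x ≤ 0) (hub : 0 ≤ u b)
    (hvC : ∀ x ∈ Icc a b, |v x| ≤ C) :
    |∫ x in a..b, u x * v' x| ≤ 2 * C * u a := by
  rw [← uIcc_of_le hab] at hu hv
  have hvcont : ContinuousOn v (uIcc a b) :=
    fun x hx => (hv x hx).continuousAt.continuousWithinAt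
  have hdrop : ∫ x in a..b, -u' x = u a - u b := by
    rw [intervalIntegral.integral_neg, integral_eq_sub_of_hasDerivAt hu hu'int]
    ring
  have hdrop_nonneg : 0 ≤ u a - u b :=
    hdrop ▸ integral_nonneg hab fun x hx => neg_nonneg.2 (hu'_nonpos x hx)
  have hrest : |∫ x in a..b, u' x * v x| ≤ C * (u a - u b) :=
    calc |∫ x in a..b, u' x * v x|
        ≤ ∫ x in a..b, |u' x * v x| := abs_integral_le_integral_abs hab
      _ ≤ ∫ x in a..b, -u' x * C :=
          integral_mono_on hab (hu'int.mul_continuousOn hvcont).abs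
            (hu'int.neg.mul_const C) fun x hx => by
            rw [abs_mul, abs_of_nonpos (hu'_nonpos x hx)]
            exact mul_le_mul_of_nonneg_left (hvC x hx) (neg_nonneg.2 (hu'_nonpos x hx))
      _ = C * (u a - u b) := by rw [intervalIntegral.integral_mul_const, hdrop, mul_comm]
  have hbound : ∀ x ∈ Icc a b, 0 ≤ u x → |u x * v x| ≤ u x * C := fun x hx hux => by
    rw [abs_mul, abs_of_nonneg hux]
    exact mul_le_mul_of_nonneg_left (hvC x hx) hux
  have hb := hbound b ⟨hab, le_rfl⟩ hub
  have ha := hbound a ⟨le_rfl, hab⟩ (by linarith)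
  rw [integral_mul_deriv_eq_deriv_mul hu hv hu'int hv'int]
  calc |u b * v b - u a * v a - ∫ x in a..b, u' x * v x|
      ≤ |u b * v b| + |u a * v a| + |∫ x in a..b, u' x * v x| :=
        (abs_sub _ _).trans (add_le_add_left (abs_sub _ _) _)
    _ ≤ 2 * C * u a := by linarith

lemma abs_integral_mul_cos_cubic_le {z a b : ℝ} (ha : 0 < a) (hza : 2 * |z| ≤ a ^ 2)
    (hab : a ≤ b) : |∫ y in a..b, y * cos (z * y + y ^ 3 / 3)| ≤ 4 / a := by
  have hz := abs_le.1 ((le_div_iff₀' two_pos).2 hza)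
  have hphase : ∀ y ∈ Icc a b, a ^ 2 / 2 ≤ z + y ^ 2 ∧ z ≤ y ^ 2 := fun y hy => by
    have : a ^ 2 ≤ y ^ 2 := pow_le_pow_left₀ ha.le hy.1 2
    constructor <;> linarith
  have hpos : ∀ y ∈ Icc a b, 0 < z + y ^ 2 := fun y hy => by
    linarith [(hphase y hy).1, pow_pos ha 2]
  have hu : ∀ y ∈ Icc a b,
      HasDerivAt (fun y => y / (z + y ^ 2)) ((z - y ^ 2) / (z + y ^ 2) ^ 2) y := fun y hy =>
    ((hasDerivAt_id' y).div ((hasDerivAt_pow 2 y).const_add z) (hpos y hy).ne').congr_deriv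
      (by ring)
  have hv : ∀ y ∈ Icc a b, HasDerivAt (fun y => sin (z * y + y ^ 3 / 3))
      ((z + y ^ 2) * cos (z * y + y ^ 3 / 3)) y := fun y _ => by
    have hφ : HasDerivAt (fun y => z * y + y ^ 3 / 3) (z + y ^ 2) y :=
      (((hasDerivAt_id' y).const_mul z).add ((hasDerivAt_pow 3 y).div_const 3)).congr_deriv
        (by ring)
    simpa only [mul_comm] using hφ.sin
  have hu'int : IntervalIntegrable (fun y => (z - y ^ 2) / (z + y ^ 2) ^ 2) volume a b :=
    ContinuousOn.intervalIntegrable <| uIcc_of_le hab ▸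
      (by fun_prop : Continuous _).continuousOn.div (by fun_prop) fun y hy =>
        pow_ne_zero _ (hpos y hy).ne'
  have hrewrite : ∫ y in a..b, y * cos (z * y + y ^ 3 / 3)
      = ∫ y in a..b, y / (z + y ^ 2) * ((z + y ^ 2) * cos (z * y + y ^ 3 / 3)) :=
    integral_congr fun y hy => by field_simp [(hpos y (uIcc_of_le hab ▸ hy)).ne']
  have hb := hpos b ⟨hab, le_rfl⟩
  have ha' := (hphase a ⟨le_rfl, hab⟩).1
  calc |∫ y in a..b, y * cos (z * y + y ^ 3 / 3)| ≤ 2 * 1 * (a / (z + a ^ 2)) := by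
        rw [hrewrite]
        refine abs_integral_mul_deriv_le_of_deriv_nonpos hab hu hv hu'int
          ((by fun_prop : Continuous _).intervalIntegrable _ _) (fun y hy => ?_)
          (div_nonneg (ha.trans_le hab).le hb.le) fun y _ => abs_sin_le_one _
        exact div_nonpos_of_nonpos_of_nonneg (by linarith [(hphase y hy).2]) (sq_nonneg _)
    _ ≤ 4 / a := by
        rw [mul_one, ← mul_div_assoc, div_le_div_iff₀ (by linarith [pow_pos ha 2]) ha]
        nlinarith

lemma uniformCauchySeqOn_integral_mul_cos_cubic (M : ℝ) :
    UniformCauchySeqOn (fun R z => ∫ y in (0:ℝ)..R, y * cos (z * y + y ^ 3 / 3))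
      atTop (Metric.ball 0 M) := by
  rw [Metric.uniformCauchySeqOn_iff]
  intro ε hε
  set N := max 1 (max (2 * M) (8 / ε))
  have hN1 : 1 ≤ N := le_max_left _ _
  have hNM : 2 * M ≤ N := (le_max_left _ _).trans (le_max_right _ _)
  have hNε : 8 / ε ≤ N := (le_max_right _ _).trans (le_max_right _ _)
  refine ⟨N, fun m hm n hn z hz => ?_⟩
  rw [Metric.mem_ball, dist_zero_right, Real.norm_eq_abs] at hz
  have htail : ∀ p q, N ≤ p → p ≤ q → |∫ y in p..q, y * cos (z * y + y ^ 3 / 3)| < ε :=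
    fun p q hp hpq =>
    calc |∫ y in p..q, y * cos (z * y + y ^ 3 / 3)| ≤ 4 / p :=
          abs_integral_mul_cos_cubic_le (by linarith) (by nlinarith) hpq
      _ ≤ 4 / (8 / ε) := div_le_div_of_nonneg_left (by norm_num) (by positivity) (hNε.trans hp)
      _ < ε := by field_simp; linarith
  have hint : ∀ R, IntervalIntegrable (fun y => y * cos (z * y + y ^ 3 / 3)) volume 0 R :=
    fun R => (by fun_prop : Continuous _).intervalIntegrable _ _
  rw [Real.dist_eq, integral_interval_sub_left (hint m) (hint n)]
  rcases le_total n m with h | h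
  · exact htail n m hn h
  · rw [integral_symm, abs_neg]
    exact htail m n hm h

lemma exists_tendsto_integral_mul_cos_cubic (z : ℝ) :
    ∃ L, Tendsto (fun R => ∫ y in (0:ℝ)..R, y * cos (z * y + y ^ 3 / 3)) atTop (𝓝 L) :=
  cauchySeq_tendsto_of_complete <|
    (uniformCauchySeqOn_integral_mul_cos_cubic (|z| + 1)).cauchySeq (by simp)

/-- The Scorer function `Gi` (defined by the improper oscillatory integral
`Gi z = (1/π) lim_{R→∞} ∫₀^R sin (z y + y³/3) dy`) is differentiable on `ℝ`, and its
derivative is obtained by differentiating under the integral sign: for every `z`,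
`Gi'(z) = (1/π) lim_{R→∞} ∫₀^R y cos (z y + y³/3) dy`, the limit existing (i.e. the
partial integrals tend to `π * Gi'(z)`). -/
theorem scorer_differentiable_deriv_integral
    (Gi : ℝ → ℝ)
    (hGi : ∀ z : ℝ, Tendsto (fun R : ℝ => ∫ y in (0:ℝ)..R, Real.sin (z * y + y ^ 3 / 3))
      atTop (nhds (π * Gi z))) :
    Differentiable ℝ Gi ∧
      ∀ z : ℝ, Tendsto (fun R : ℝ => ∫ y in (0:ℝ)..R, y * Real.cos (z * y + y ^ 3 / 3))
        atTop (nhds (π * deriv Gi z)) := by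
  choose L hL using exists_tendsto_integral_mul_cos_cubic
  have hderiv : ∀ z, HasDerivAt Gi (L z / π) z := fun z => by
    have h := hasDerivAt_of_tendstoUniformlyOn Metric.isOpen_ball
      ((uniformCauchySeqOn_integral_mul_cos_cubic (|z| + 1)).tendstoUniformlyOn_of_tendsto
        fun x _ => hL x)
      (Eventually.of_forall fun R x _ =>
        hasDerivAt_integral_sin_mul_add (ψ := fun y => y ^ 3 / 3) (by fun_prop) 0 R x)
      (fun x _ => hGi x) (by simp : z ∈ Metric.ball (0:ℝ) (|z| + 1))
    simpa [mul_div_cancel_left₀ _ pi_ne_zero] using h.div_const π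
  refine ⟨fun z => (hderiv z).differentiableAt, fun z => ?_⟩
  rw [(hderiv z).deriv, mul_div_cancel₀ _ pi_ne_zero]
  exact hL z
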